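/- For every natural number m, the square of the m-th probabilists' Hermite polynomial satisfies the polynomial identity He_m(x)² = Σ_{k=0}^{m} k! · C(m,k)² · He_{2m−2k}(x), where C(m,k) denotes the binomial coefficient. -/
import Mathlib


open Polynomial

lemma deriv_hermite (n : ℕ) :
    derivative (hermite (n+1)) = C (n+1 : ℤ) * hermite n := by
  induction n with
  | zero => simp [hermite_one, hermite_zero]
  | succ n ih =>
    have hd : derivative (hermite n) = X * hermite n - hermite (n+1) := by
      rw [hermite_succ]; ring
    have hC : (C (((n+1:ℕ):ℤ)+1) : Polynomial ℤ) = C ((n:ℤ)+1) + 1 := by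
      rw [show ((n+1:ℕ):ℤ)+1 = ((n:ℤ)+1)+1 by push_cast; ring, C_add, C_1]
    rw [hermite_succ (n+1), derivative_sub, derivative_mul, derivative_X, ih,
      derivative_mul, hd, hC]
    simp only [derivative_C]
    ring

/-- The `n`-th probabilists' Hermite polynomial, with real coefficients. -/
noncomputable def hermiteR (n : ℕ) : Polynomial ℝ :=
  (Polynomial.hermite n).map (Int.castRingHom ℝ)

lemma hermiteR_zero : hermiteR 0 = 1 := by simp [hermiteR, hermite_zero]

lemma hermiteR_one : hermiteR 1 = X := by simp [hermiteR, hermite_one]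

lemma X_mul_hermiteR (n : ℕ) :
    X * hermiteR n = hermiteR (n+1) + C (n:ℝ) * hermiteR (n-1) := by
  cases n with
  | zero => simp [hermiteR_zero, hermiteR_one]
  | succ n =>
    have h := congrArg (Polynomial.map (Int.castRingHom ℝ)) (hermite_succ (n+1))
    rw [Polynomial.map_sub, Polynomial.map_mul, Polynomial.map_X, deriv_hermite,
      Polynomial.map_mul, map_C] at h
    simp only [map_add, map_one, map_natCast] at h
    simp only [hermiteR]
    rw [h]
    simp only [C_add, C_1, C_eq_natCast]
    push_cast
    ring

lemma coeffId (m n k : ℕ) (hk : k ≤ n + 1) :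
    (((k+1).factorial : ℝ) * (m.choose (k+1)) * ((n+2).choose (k+1)))
      = ((k+1).factorial : ℝ) * (m.choose (k+1)) * ((n+1).choose (k+1))
        + ((k.factorial : ℝ) * (m.choose k) * ((n+1).choose k)) * ((m + n + 1 - 2*k : ℕ) : ℝ)
        - ((n:ℝ)+1) * ((k.factorial : ℝ) * (m.choose k) * (n.choose k)) := by
  by_cases hkm : k ≤ m
  · have h2 : 2*k ≤ m + n + 1 := by omega
    have hcast : ((m + n + 1 - 2*k : ℕ) : ℝ) = (m:ℝ) + n + 1 - 2*k := by
      rw [Nat.cast_sub h2]; push_cast; ring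
    have r1 : ((k:ℝ)+1) * (m.choose (k+1)) = (m.choose k) * ((m:ℝ) - k) := by
      have h := congrArg (Nat.cast : ℕ → ℝ) (Nat.choose_succ_right_eq m k)
      rw [Nat.cast_mul, Nat.cast_mul, Nat.cast_sub hkm] at h
      push_cast at h
      linarith
    have r3 : ((n.choose k : ℝ)) * ((n:ℝ)+1) = ((n+1).choose k) * ((n:ℝ)+1-k) := by
      have h := congrArg (Nat.cast : ℕ → ℝ) (Nat.choose_mul_succ_eq n k)
      rw [Nat.cast_mul, Nat.cast_mul, Nat.cast_sub hk] at h
      push_cast at h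
      linarith
    have pascal : (((n+2).choose (k+1) : ℕ) : ℝ) = ((n+1).choose k) + ((n+1).choose (k+1)) := by
      rw [show n+2 = (n+1)+1 from rfl, Nat.choose_succ_succ (n+1) k]
      push_cast; ring
    have fact : (((k+1).factorial : ℕ) : ℝ) = ((k:ℝ)+1) * (k.factorial) := by
      rw [Nat.factorial_succ]; push_cast; ring
    rw [pascal, hcast, fact]
    linear_combination ((k.factorial : ℝ) * ((n+1).choose k : ℝ)) * r1
      + ((k.factorial : ℝ) * (m.choose k : ℝ)) * r3
  · have c0 : m.choose k = 0 := Nat.choose_eq_zero_of_lt (by omega)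
    have c1 : m.choose (k+1) = 0 := Nat.choose_eq_zero_of_lt (by omega)
    simp [c0, c1]

lemma hermiteR_mul (m n : ℕ) : hermiteR m * hermiteR n =
    ∑ k ∈ Finset.range (n+1),
      C ((k.factorial : ℝ) * (m.choose k) * (n.choose k)) * hermiteR (m + n - 2*k) := by
  induction n using Nat.twoStepInduction with
  | zero => simp [hermiteR_zero]
  | one =>
    rw [Finset.sum_range_succ, Finset.sum_range_one]
    simp only [Nat.factorial_zero, Nat.factorial_one, Nat.choose_zero_right,
      Nat.choose_one_right, Nat.choose_self, Nat.cast_one, Nat.cast_ofNat]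
    rw [hermiteR_one, mul_comm, X_mul_hermiteR]
    have : m + 1 - 2 = m - 1 := by omega
    rw [this, show m + 1 - 0 = m + 1 by omega]
    simp only [one_mul, mul_one, map_one]
  | more n ih1 ih2 =>
    have e1 : hermiteR (n+2) = X * hermiteR (n+1) - C ((n:ℝ)+1) * hermiteR n := by
      have h := X_mul_hermiteR (n+1)
      rw [show (n+1) - 1 = n from rfl] at h
      push_cast at h
      linear_combination -h
    have e2 : hermiteR m * hermiteR (n+2) =
        X * (hermiteR m * hermiteR (n+1)) - C ((n:ℝ)+1) * (hermiteR m * hermiteR n) := by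
      rw [e1]; ring
    rw [e2, ih1, ih2, Finset.mul_sum, Finset.mul_sum]
    have hterm : ∀ k ∈ Finset.range (n+2),
        X * (C ((k.factorial : ℝ) * (m.choose k) * ((n+1).choose k)) * hermiteR (m + (n+1) - 2*k)) =
          C ((k.factorial : ℝ) * (m.choose k) * ((n+1).choose k)) * hermiteR (m + n + 2 - 2*k)
          + C (((k.factorial : ℝ) * (m.choose k) * ((n+1).choose k)) * ((m + n + 1 - 2*k : ℕ) : ℝ))
              * hermiteR (m + n + 2 - 2*(k+1)) := by
      intro k hk
      rw [Finset.mem_range] at hk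
      by_cases hkm : k ≤ m
      · have h2 : 2*k ≤ m + n + 1 := by omega
        rw [show m + (n+1) - 2*k = m + n + 1 - 2*k from by omega]
        rw [mul_left_comm, X_mul_hermiteR (m + n + 1 - 2*k)]
        rw [show (m + n + 1 - 2*k) + 1 = m + n + 2 - 2*k from by omega]
        by_cases hz : 2*k ≤ m + n
        · rw [show (m + n + 1 - 2*k) - 1 = m + n + 2 - 2*(k+1) from by omega]
          simp only [C_mul]; ring
        · have hz2 : m + n + 1 - 2*k = 0 := by omega
          rw [hz2]
          simp
      · have c0 : m.choose k = 0 := Nat.choose_eq_zero_of_lt (by omega)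
        simp [c0]
    rw [Finset.sum_congr rfl hterm, Finset.sum_add_distrib]
    rw [Finset.sum_range_succ' (fun k => C ((k.factorial : ℝ) * (m.choose k) * ((n+2).choose k)) *
          hermiteR (m + (n+2) - 2*k)) (n+2)]
    rw [Finset.sum_range_succ' (fun k => C ((k.factorial : ℝ) * (m.choose k) * ((n+1).choose k)) *
          hermiteR (m + n + 2 - 2*k)) (n+1)]
    have hext1 : ∑ k ∈ Finset.range (n+2),
        C (((k+1).factorial : ℝ) * (m.choose (k+1)) * ((n+1).choose (k+1))) *
          hermiteR (m + n + 2 - 2*(k+1))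
        = ∑ k ∈ Finset.range (n+1),
        C (((k+1).factorial : ℝ) * (m.choose (k+1)) * ((n+1).choose (k+1))) *
          hermiteR (m + n + 2 - 2*(k+1)) := by
      rw [Finset.sum_range_succ]
      simp [Nat.choose_eq_zero_of_lt (show n+1 < n+1+1 by omega)]
    have hext2 : ∑ k ∈ Finset.range (n+2),
        C ((n:ℝ)+1) * (C ((k.factorial : ℝ) * (m.choose k) * (n.choose k)) * hermiteR (m + n - 2*k))
        = ∑ k ∈ Finset.range (n+1),
        C ((n:ℝ)+1) * (C ((k.factorial : ℝ) * (m.choose k) * (n.choose k)) * hermiteR (m + n - 2*k)) := by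
      rw [Finset.sum_range_succ,
        show n.choose (n+1) = 0 from Nat.choose_eq_zero_of_lt (by omega)]
      simp only [Nat.cast_zero, mul_zero, map_zero, zero_mul, add_zero]
    rw [← hext1, ← hext2]
    have hsum : (∑ k ∈ Finset.range (n+2),
          C (((k+1).factorial : ℝ) * (m.choose (k+1)) * ((n+1).choose (k+1))) *
            hermiteR (m + n + 2 - 2*(k+1)))
        + (∑ k ∈ Finset.range (n+2),
          C (((k.factorial : ℝ) * (m.choose k) * ((n+1).choose k)) * ((m + n + 1 - 2*k : ℕ) : ℝ)) *
            hermiteR (m + n + 2 - 2*(k+1)))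
        - (∑ k ∈ Finset.range (n+2),
          C ((n:ℝ)+1) * (C ((k.factorial : ℝ) * (m.choose k) * (n.choose k)) *
            hermiteR (m + n - 2*k)))
        = ∑ k ∈ Finset.range (n+2),
          C (((k+1).factorial : ℝ) * (m.choose (k+1)) * ((n+2).choose (k+1))) *
            hermiteR (m + (n+2) - 2*(k+1)) := by
      rw [← Finset.sum_add_distrib, ← Finset.sum_sub_distrib]
      refine Finset.sum_congr rfl ?_
      intro k hk
      rw [Finset.mem_range] at hk
      have hc := coeffId m n k (by omega)
      rw [show m + (n+2) - 2*(k+1) = m + n + 2 - 2*(k+1) from by omega,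
          show m + n - 2*k = m + n + 2 - 2*(k+1) from by omega, hc]
      simp only [map_sub, map_add, C_mul]
      ring
    rw [show m + (n+2) - 2*0 = m + n + 2 - 2*0 from by omega]
    linear_combination (norm := (simp only [Nat.choose_zero_right, Nat.factorial_zero]; ring1)) hsum

/-- The product formula for the square of a Hermite polynomial:
`He_m(x)² = ∑_{k=0}^{m} k! (m choose k)² He_{2m-2k}(x)`. -/
theorem hermite_sq_eq_sum (m : ℕ) :
    (hermiteR m) ^ 2 =
      ∑ k ∈ Finset.range (m + 1),
        Polynomial.C ((k.factorial : ℝ) * (m.choose k : ℝ) ^ 2) * hermiteR (2 * m - 2 * k) := by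
  rw [sq, hermiteR_mul m m]
  refine Finset.sum_congr rfl ?_
  intro k hk
  rw [show m + m - 2*k = 2*m - 2*k from by omega]
  congr 1
  ring
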